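/- Define L_{ρ,m} = ρ^{m+1}(m+1)^7/(m!)². There exists a constant C > 0 such that for all integers m ≥ 0 and all k with ⌊m/2⌋ + 1 ≤ k ≤ m: (m!/(k!(m-k)!)) · L_{ρ,m}/(L_{ρ,k} · L_{ρ,m-k+3}) ≤ (C/ρ⁴) · 1/(m-k+1). -/

import Mathlib

/-!
Writing `m = k + j`, the powers of `ρ` leave `ρ⁻⁴` and the weighted ratio factors as
`(k! j!/m!) · ((m+1)/(k+1))⁷ · ((j+1)(j+2)(j+3))²/(j+4)⁷`. The first factor is at most `1`,
the second at most `2⁷` because `k ≥ m/2` forces `j ≤ k`, and the third at most `1/(j+1)`.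
-/

/-- The Gevrey-2 weight `L_{ρ,m} = ρ^{m+1}(m+1)^7/(m!)²`. -/
noncomputable def Lw (ρ : ℝ) (m : ℕ) : ℝ :=
  ρ ^ (m + 1) * ((m : ℝ) + 1) ^ 7 / ((Nat.factorial m : ℝ)) ^ 2

open Nat

lemma choose_mul_Lw_ratio_eq {ρ : ℝ} (hρ : ρ ≠ 0) (k j : ℕ) :
    ((k + j)! : ℝ) / ((k ! : ℝ) * (j ! : ℝ)) * (Lw ρ (k + j) / (Lw ρ k * Lw ρ (j + 3))) =
      (k ! * j ! / (k + j)! : ℝ) * (((k : ℝ) + j + 1) / (k + 1)) ^ 7 *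
        (((j + 1) * (j + 2) * (j + 3) : ℝ) ^ 2 / (j + 4) ^ 7) / ρ ^ 4 := by
  have h3 : ((j + 3)! : ℝ) = (j + 1) * (j + 2) * (j + 3) * j ! := by
    push_cast [Nat.factorial_succ]; ring
  simp only [Lw, h3]
  push_cast
  field_simp
  ring

lemma factorial_mul_factorial_div_factorial_add_le_one (k j : ℕ) :
    (k ! * j ! / (k + j)! : ℝ) ≤ 1 := by
  rw [div_le_one (by positivity)]
  exact_mod_cast Nat.le_of_dvd (factorial_pos _) (factorial_mul_factorial_dvd_factorial_add k j)

lemma sq_prod_add_div_add_four_pow_seven_le {x : ℝ} (hx : 0 ≤ x) :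
    ((x + 1) * (x + 2) * (x + 3)) ^ 2 / (x + 4) ^ 7 ≤ 1 / (x + 1) := by
  rw [div_le_div_iff₀ (by positivity) (by positivity)]
  calc ((x + 1) * (x + 2) * (x + 3)) ^ 2 * (x + 1)
      ≤ ((x + 4) * (x + 4) * (x + 4)) ^ 2 * (x + 4) := by gcongr <;> linarith
    _ = 1 * (x + 4) ^ 7 := by ring

/-- High-frequency combinatorial weight inequality: there is a constant `C > 0` such that
for `0 < ρ ≤ 1`, `m ≥ 0` and `⌊m/2⌋ + 1 ≤ k ≤ m`,
`(m!/(k!(m-k)!)) L_{ρ,m}/(L_{ρ,k} L_{ρ,m-k+3}) ≤ (C/ρ⁴) (1/(m-k+1))`. -/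
theorem weight_ineq_high : ∃ C : ℝ, 0 < C ∧
    ∀ ρ : ℝ, 0 < ρ → ρ ≤ 1 → ∀ m k : ℕ, m / 2 + 1 ≤ k → k ≤ m →
      (Nat.factorial m : ℝ) / ((Nat.factorial k : ℝ) * (Nat.factorial (m - k) : ℝ)) *
          (Lw ρ m / (Lw ρ k * Lw ρ (m - k + 3))) ≤
        C / ρ ^ 4 * (1 / ((m - k : ℕ) + 1 : ℝ)) := by
  refine ⟨2 ^ 7, by norm_num, fun ρ hρ _ m k hk hkm => ?_⟩
  obtain ⟨j, rfl⟩ := Nat.exists_eq_add_of_le hkm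
  have hjk : (j : ℝ) ≤ k := by exact_mod_cast (by omega : j ≤ k)
  rw [Nat.add_sub_cancel_left, choose_mul_Lw_ratio_eq hρ.ne']
  calc _ ≤ 1 * 2 ^ 7 * (1 / ((j : ℝ) + 1)) / ρ ^ 4 := by
        gcongr ?_ * ?_ * ?_ / _
        · exact factorial_mul_factorial_div_factorial_add_le_one k j
        · gcongr
          rw [div_le_iff₀ (by positivity)]
          linarith
        · exact sq_prod_add_div_add_four_pow_seven_le j.cast_nonneg
    _ = _ := by ring
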